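/- Let a, b be complex numbers such that (2b)_k ≠ 0, (b)_k ≠ 0, and (2b)_{2n} ≠ 0 for the relevant indices, and let k be a nonnegative integer. Then (2a)_k / (2b)_k = (k! / (b)_k) · Σ_{n=0}^{⌊k/2⌋} ((a)_{k−n} · (b)_n · (b−a)_n / ((2b)_{2n} · n! · (k−2n)!)) · (−1)^n, where ⌊x⌋ denotes the floor function. -/

import Mathlib

/-!
Clearing denominators, the identity says `∑ n, F k n = (2a)_k (b)_k` for the summand `F = wzSummand`.
This follows by induction on `k` from Zeilberger's creative telescoping:
`F (k+1) n - (2a+k)(b+k) F k n = G k (n+1) - G k n` with `G = R F` for the rational certificate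
`R k n = -2n (2b+2n-1)(a+k-n) / (k+1-2n)`. Summed over `n`, this shows that `∑ n, F k n` satisfies
the recurrence `S (k+1) = (2a+k)(b+k) S k` of `(2a)_k (b)_k`; the top one or two terms, where
`k - 2n ≤ 1`, are checked separately according to the parity of `k`.
-/

/-- Pochhammer symbol `(x)_n = x (x+1) ⋯ (x+n-1)`, with `(x)_0 = 1`. -/
noncomputable def poch (x : ℂ) (n : ℕ) : ℂ := ∏ k ∈ Finset.range n, (x + k)

@[simp] lemma poch_zero (x : ℂ) : poch x 0 = 1 := Finset.prod_range_zero _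

lemma poch_succ (x : ℂ) (n : ℕ) : poch x (n + 1) = poch x n * (x + n) :=
  Finset.prod_range_succ _ _

lemma poch_add (x : ℂ) (m n : ℕ) : poch x (m + n) = poch x m * poch (x + m) n := by
  simp only [poch, Finset.prod_range_add, Nat.cast_add, add_assoc]

lemma poch_succ_left (x : ℂ) (n : ℕ) : poch x (n + 1) = x * poch (x + 1) n := by
  rw [add_comm, poch_add]; simp [poch]

section WZ

open Nat

noncomputable def wzSummand (a b : ℂ) (k n : ℕ) : ℂ :=
  poch a (k - n) * poch b n * poch (b - a) n * poch (2 * b + 2 * n) (k - 2 * n) * (-1) ^ n *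
    k ! / (n ! * (k - 2 * n)!)

-- Used only for `2n ≤ k`, where `k + 1 - 2n ≥ 1`: no truncated subtraction, no division by zero.
noncomputable def wzCertificate (a b : ℂ) (k n : ℕ) : ℂ :=
  -2 * n * (2 * b + 2 * n - 1) * (a + k - n) / (k + 1 - 2 * n : ℕ) * wzSummand a b k n

@[simp] lemma wzCertificate_zero (a b : ℂ) (k : ℕ) : wzCertificate a b k 0 = 0 := by
  simp [wzCertificate]

lemma wzSummand_recurrence (a b : ℂ) {k n : ℕ} (h : 2 * n + 2 ≤ k) :
    wzSummand a b (k + 1) n - (2 * a + k) * (b + k) * wzSummand a b k n =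
      wzCertificate a b k (n + 1) - wzCertificate a b k n := by
  obtain ⟨j, rfl⟩ := Nat.exists_eq_add_of_le h
  have e1 : 2 * n + 2 + j + 1 - n = n + 1 + j + 2 := by omega
  have e2 : 2 * n + 2 + j + 1 - 2 * n = j + 2 + 1 := by omega
  have e3 : 2 * n + 2 + j - n = n + 1 + j + 1 := by omega
  have e4 : 2 * n + 2 + j - 2 * n = j + 2 := by omega
  have e5 : 2 * n + 2 + j - (n + 1) = n + 1 + j := by omega
  have e6 : 2 * n + 2 + j - 2 * (n + 1) = j := by omega
  have e7 : 2 * n + 2 + j + 1 - 2 * (n + 1) = j + 1 := by omega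
  have hshift : 2 * b + 2 * ((n + 1 : ℕ) : ℂ) = 2 * b + 2 * n + 1 + 1 := by push_cast; ring
  simp only [wzCertificate, wzSummand, e1, e2, e3, e4, e5, e6, e7, hshift]
  rw [poch_succ (2 * b + 2 * n) (j + 2), poch_succ_left (2 * b + 2 * n),
    poch_succ_left (2 * b + 2 * n + 1)]
  simp only [poch_succ, Nat.factorial_succ]
  have h1 : (j : ℂ) + 1 ≠ 0 := Nat.cast_add_one_ne_zero j
  have h2 : (j : ℂ) + 1 + 1 ≠ 0 := by exact_mod_cast Nat.succ_ne_zero (j + 1)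
  have h3 : (j : ℂ) + 2 + 1 ≠ 0 := by exact_mod_cast Nat.succ_ne_zero (j + 2)
  push_cast
  field_simp
  ring

lemma wzSummand_recurrence_even (a b : ℂ) (m : ℕ) :
    wzSummand a b (2 * m + 1) m - (2 * a + (2 * m : ℕ)) * (b + (2 * m : ℕ)) * wzSummand a b (2 * m) m =
      -wzCertificate a b (2 * m) m := by
  have e1 : 2 * m + 1 - m = m + 1 := by omega
  have e2 : 2 * m + 1 - 2 * m = 1 := by omega
  have e3 : 2 * m - m = m := by omega
  simp only [wzCertificate, wzSummand, e1, e2, e3, Nat.sub_self, poch_succ, poch_zero,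
    Nat.factorial_succ, Nat.factorial_zero]
  push_cast
  field_simp
  ring

lemma wzSummand_recurrence_odd (a b : ℂ) (m : ℕ) :
    wzSummand a b (2 * m + 2) m
        - (2 * a + (2 * m + 1 : ℕ)) * (b + (2 * m + 1 : ℕ)) * wzSummand a b (2 * m + 1) m
        + wzSummand a b (2 * m + 2) (m + 1) =
      -wzCertificate a b (2 * m + 1) m := by
  have e1 : 2 * m + 2 - m = m + 2 := by omega
  have e2 : 2 * m + 2 - 2 * m = 2 := by omega
  have e3 : 2 * m + 1 - m = m + 1 := by omega
  have e4 : 2 * m + 1 - 2 * m = 1 := by omega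
  have e5 : 2 * m + 2 - (m + 1) = m + 1 := by omega
  have e6 : 2 * m + 2 - 2 * (m + 1) = 0 := by omega
  simp only [wzCertificate, wzSummand, e1, e2, e3, e4, e5, e6, poch_succ, poch_zero,
    Nat.factorial_succ, Nat.factorial_zero]
  push_cast
  field_simp
  ring

lemma sum_range_wzSummand_telescope (a b : ℂ) {k m : ℕ} (hm : 2 * m ≤ k) :
    ∑ n ∈ Finset.range m, (wzSummand a b (k + 1) n - (2 * a + k) * (b + k) * wzSummand a b k n) =
      wzCertificate a b k m := by
  rw [← sub_zero (wzCertificate a b k m), ← wzCertificate_zero a b k, ← Finset.sum_range_sub]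
  refine Finset.sum_congr rfl fun n hn ↦ wzSummand_recurrence a b ?_
  have := Finset.mem_range.mp hn
  omega

lemma sum_wzSummand_succ (a b : ℂ) (k : ℕ) :
    ∑ n ∈ Finset.range ((k + 1) / 2 + 1), wzSummand a b (k + 1) n =
      (2 * a + k) * (b + k) * ∑ n ∈ Finset.range (k / 2 + 1), wzSummand a b k n := by
  obtain ⟨m, rfl | rfl⟩ := Nat.even_or_odd' k
  · have htel := sum_range_wzSummand_telescope a b (le_refl (2 * m))
    rw [show (2 * m + 1) / 2 = m by omega, show 2 * m / 2 = m by omega, Finset.mul_sum,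
      Finset.sum_range_succ, Finset.sum_range_succ, Finset.sum_sub_distrib] at *
    linear_combination htel + wzSummand_recurrence_even a b m
  · have htel := sum_range_wzSummand_telescope a b (Nat.le_succ (2 * m))
    rw [show (2 * m + 1 + 1) / 2 = m + 1 by omega, show (2 * m + 1) / 2 = m by omega,
      Finset.mul_sum, Finset.sum_range_succ, Finset.sum_range_succ, Finset.sum_range_succ,
      Finset.sum_sub_distrib] at *
    linear_combination htel + wzSummand_recurrence_odd a b m

lemma sum_wzSummand (a b : ℂ) (k : ℕ) :
    ∑ n ∈ Finset.range (k / 2 + 1), wzSummand a b k n = poch (2 * a) k * poch b k := by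
  induction k with
  | zero => simp [wzSummand]
  | succ k ih =>
    rw [sum_wzSummand_succ, ih, poch_succ, poch_succ]
    ring

lemma wzSummand_eq (a b : ℂ) {k n : ℕ} (hn : 2 * n ≤ k) (h2b : poch (2 * b) (2 * n) ≠ 0) :
    wzSummand a b k n =
      poch a (k - n) * poch b n * poch (b - a) n / (poch (2 * b) (2 * n) * n ! * (k - 2 * n)!) *
        (-1) ^ n * (poch (2 * b) k * k !) := by
  obtain ⟨j, rfl⟩ := Nat.exists_eq_add_of_le hn
  rw [wzSummand, poch_add, Nat.add_sub_cancel_left]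
  -- otherwise `field_simp` rewrites `2 * b` to `b * 2` in the goal and no longer sees `h2b`
  generalize poch (2 * b) (2 * n) = p at h2b ⊢
  push_cast
  field_simp

end WZ

theorem poch_sum_identity (a b : ℂ) (k : ℕ)
    (h2b : poch (2 * b) k ≠ 0) (hb : poch b k ≠ 0)
    (h2b2n : ∀ n ≤ k / 2, poch (2 * b) (2 * n) ≠ 0) :
    poch (2 * a) k / poch (2 * b) k =
      (k.factorial : ℂ) / poch b k *
        ∑ n ∈ Finset.range (k / 2 + 1),
          poch a (k - n) * poch b n * poch (b - a) n /
            (poch (2 * b) (2 * n) * n.factorial * (k - 2 * n).factorial) * (-1 : ℂ) ^ n := by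
  have hk : (k.factorial : ℂ) ≠ 0 := by exact_mod_cast k.factorial_ne_zero
  have hsum : ∑ n ∈ Finset.range (k / 2 + 1),
      poch a (k - n) * poch b n * poch (b - a) n /
        (poch (2 * b) (2 * n) * n.factorial * (k - 2 * n).factorial) * (-1 : ℂ) ^ n =
      poch (2 * a) k * poch b k / (poch (2 * b) k * k.factorial) := by
    rw [eq_div_iff (mul_ne_zero h2b hk), Finset.sum_mul, ← sum_wzSummand]
    refine Finset.sum_congr rfl fun n hn ↦ (wzSummand_eq a b ?_ (h2b2n n ?_)).symm <;>
      · have := Finset.mem_range.mp hn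
        omega
  rw [hsum]
  field_simp
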